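/- Define C_EA(n̄_S) as the entanglement-assisted capacity of the bosonic channel (as in the previous context, with fixed η ∈ (0,1), n̄_B > 0). Then as n̄_S → 0⁺, C_EA(n̄_S) = −η·n̄_S·log₂(n̄_S)/(1 + (1−η)·n̄_B) + O(n̄_S), i.e., lim_{n̄_S→0⁺} C_EA(n̄_S)/(−n̄_S·log₂ n̄_S) = η/(1 + (1−η)·n̄_B). -/

import Mathlib

/-!
Write g(x) = (1 + x) log(1 + x) - x log x. As n̄_S → 0, both η n̄_S + (1 - η) n̄_B and A₊ tend
to a = (1 - η) n̄_B > 0, while A₋ vanishes to first order with slope c = 1 - η / (1 + a)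
(differentiate B = √Q at 0, where Q(0) = (1 + a)²). Apart from the two singular pieces
-n̄_S log n̄_S and A₋ log A₋, the expression for C_EA is differentiable at 0 and vanishes there,
so it is O(n̄_S) = o(n̄_S log n̄_S). Against -n̄_S log n̄_S the singular pieces contribute 1 and
-c, since log A₋ = log n̄_S + log (A₋ / n̄_S) with A₋ / n̄_S → c. Hence the limit is 1 - c.
-/

open Real Filter Set Topology

lemma tendsto_inv_logb_nhdsGT_zero {b : ℝ} (hb : 1 < b) :
    Tendsto (fun x => (logb b x)⁻¹) (𝓝[>] 0) (𝓝 0) :=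
  tendsto_inv_atBot_zero.comp (tendsto_logb_nhdsGT_zero hb)

lemma tendsto_div_self_nhdsGT_zero {f : ℝ → ℝ} {f' : ℝ} (hf : HasDerivAt f f' 0) (h0 : f 0 = 0) :
    Tendsto (fun x => f x / x) (𝓝[>] 0) (𝓝 f') := by
  simpa [h0, div_eq_inv_mul] using hf.tendsto_slope_zero_right

lemma tendsto_div_mul_logb_nhdsGT_zero {b : ℝ} (hb : 1 < b) {f : ℝ → ℝ} {f' : ℝ}
    (hf : HasDerivAt f f' 0) (h0 : f 0 = 0) :
    Tendsto (fun x => f x / (x * logb b x)) (𝓝[>] 0) (𝓝 0) := by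
  simpa using ((tendsto_div_self_nhdsGT_zero hf h0).mul
    (tendsto_inv_logb_nhdsGT_zero hb)).congr fun x => by ring

lemma tendsto_mul_logb_div_mul_logb_nhdsGT_zero {b c : ℝ} (hb : 1 < b) (hc : 0 < c) {u : ℝ → ℝ}
    (hu : Tendsto (fun x => u x / x) (𝓝[>] 0) (𝓝 c)) :
    Tendsto (fun x => u x * logb b (u x) / (x * logb b x)) (𝓝[>] 0) (𝓝 c) := by
  have hlog : Tendsto (fun x => logb b (u x / x)) (𝓝[>] 0) (𝓝 (logb b c)) :=
    ((continuousAt_log hc.ne').div_const _).tendsto.comp hu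
  have hlim := hu.mul (tendsto_const_nhds (x := (1 : ℝ)).add
    (hlog.mul (tendsto_inv_logb_nhdsGT_zero hb)))
  rw [mul_zero, add_zero, mul_one] at hlim
  refine hlim.congr' ?_
  filter_upwards [hu.eventually (lt_mem_nhds hc), Ioo_mem_nhdsGT one_pos] with x hux ⟨hx0, hx1⟩
  have hlogx : logb b x ≠ 0 := (logb_neg hb hx0 hx1).ne
  rw [show logb b (u x) = logb b x + logb b (u x / x) by
    rw [← logb_mul hx0.ne' hux.ne', mul_div_cancel₀ _ hx0.ne']]
  field_simp

noncomputable def thermalEntropy (x : ℝ) : ℝ := (1 + x) * logb 2 (1 + x) - x * logb 2 x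

lemma differentiableAt_thermalEntropy {x : ℝ} (hx : x ≠ 0) (hx' : 1 + x ≠ 0) :
    DifferentiableAt ℝ thermalEntropy x := by
  unfold thermalEntropy logb
  fun_prop (disch := assumption)

lemma tendsto_thermalEntropy_combination {m p q : ℝ → ℝ} {c : ℝ}
    (hm : DifferentiableAt ℝ m 0) (hp : DifferentiableAt ℝ p 0) (hmp : m 0 = p 0) (hp0 : 0 < p 0)
    (hq : HasDerivAt q c 0) (hq0 : q 0 = 0) (hc : 0 < c) :
    Tendsto (fun n => (thermalEntropy n + thermalEntropy (m n) - thermalEntropy (p n)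
        - thermalEntropy (q n)) / (-(n * logb 2 n))) (𝓝[>] 0) (𝓝 (1 - c)) := by
  set S := fun n => (1 + n) * logb 2 (1 + n) + thermalEntropy (m n) - thermalEntropy (p n)
    - (1 + q n) * logb 2 (1 + q n)
  have hSdiff : DifferentiableAt ℝ S 0 := by
    have hmp' : DifferentiableAt ℝ thermalEntropy (m 0) := by
      rw [hmp]; exact differentiableAt_thermalEntropy (by positivity) (by positivity)
    have hp' : DifferentiableAt ℝ thermalEntropy (p 0) :=
      differentiableAt_thermalEntropy (by positivity) (by positivity)
    have hq' := hq.differentiableAt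
    simp only [S, logb]
    fun_prop (disch := simp [hq0])
  have hS0 : S 0 = 0 := by simp [S, hmp, hq0]
  have hlim := ((tendsto_div_mul_logb_nhdsGT_zero one_lt_two hSdiff.hasDerivAt hS0).neg.add
    (tendsto_const_nhds (x := (1 : ℝ)))).sub (tendsto_mul_logb_div_mul_logb_nhdsGT_zero one_lt_two hc
      (tendsto_div_self_nhdsGT_zero hq hq0))
  rw [neg_zero, zero_add] at hlim
  refine hlim.congr' ?_
  filter_upwards [Ioo_mem_nhdsGT one_pos] with n ⟨hn0, hn1⟩
  have hlogn : logb 2 n ≠ 0 := (logb_neg one_lt_two hn0 hn1).ne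
  simp only [S, thermalEntropy]
  field_simp
  ring

lemma hasDerivAt_sqrt_discriminant {η a : ℝ} (ha : 0 < 1 + a) :
    HasDerivAt (fun n => √((n + 1 + η * n + a) ^ 2 - 4 * η * n * (n + 1)))
      (1 + η - 2 * η / (1 + a)) 0 := by
  have hQ : HasDerivAt (fun n => (n + 1 + η * n + a) ^ 2 - 4 * η * n * (n + 1))
      (2 * (1 + a) * (1 + η) - 4 * η) 0 := by
    have hid := hasDerivAt_id (0 : ℝ)
    refine ((((hid.add_const 1).add (hid.const_mul η)).add_const a).pow 2 |>.sub
      ((hid.const_mul (4 * η)).mul (hid.add_const 1))).congr_deriv ?_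
    simp
  convert hQ.sqrt (by simp; positivity) using 1
  simp only [mul_zero, add_zero, zero_add, zero_mul, sub_zero, sqrt_sq ha.le]
  field_simp
  ring

theorem stmt_6 (η nB : ℝ) (hη : η ∈ Set.Ioo (0:ℝ) 1) (hnB : 0 < nB)
    (g : ℝ → ℝ) (hg : ∀ x, g x = (1 + x) * Real.logb 2 (1 + x) - x * Real.logb 2 x)
    (B Ap Am CEA : ℝ → ℝ)
    (hB : ∀ nS, B nS = Real.sqrt ((nS + 1 + η * nS + (1 - η) * nB) ^ 2 - 4 * η * nS * (nS + 1)))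
    (hAp : ∀ nS, Ap nS = (B nS - 1 + (1 - η) * (nB - nS)) / 2)
    (hAm : ∀ nS, Am nS = (B nS - 1 - (1 - η) * (nB - nS)) / 2)
    (hCEA : ∀ nS, CEA nS = g nS + g (η * nS + (1 - η) * nB) - g (Ap nS) - g (Am nS)) :
    Filter.Tendsto (fun nS : ℝ => CEA nS / (-(nS * Real.logb 2 nS)))
      (nhdsWithin 0 (Set.Ioi 0)) (nhds (η / (1 + (1 - η) * nB))) := by
  obtain ⟨hη0, hη1⟩ := hη
  set a := (1 - η) * nB
  have ha : 0 < a := mul_pos (by linarith) hnB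
  have hB' : HasDerivAt B (1 + η - 2 * η / (1 + a)) 0 :=
    funext hB ▸ hasDerivAt_sqrt_discriminant (by linarith)
  have hB0 : B 0 = 1 + a := by simp [hB, sqrt_sq (by linarith : 0 ≤ 1 + a)]
  have hshift : HasDerivAt (fun n => (1 - η) * (nB - n)) (-(1 - η)) 0 := by
    simpa using ((hasDerivAt_id (0 : ℝ)).const_sub nB).const_mul (1 - η)
  have hAp' : DifferentiableAt ℝ Ap 0 := by
    have hBdiff := hB'.differentiableAt
    rw [funext hAp]
    fun_prop
  have hAm' : HasDerivAt Am (1 - η / (1 + a)) 0 := by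
    rw [funext hAm]
    refine (((hB'.sub_const 1).sub hshift).div_const 2).congr_deriv ?_
    field_simp
    ring
  have hc : 0 < 1 - η / (1 + a) := by
    rw [sub_pos, div_lt_one (by linarith)]; linarith
  have hlim := tendsto_thermalEntropy_combination (m := fun n => η * n + a) (by fun_prop)
    hAp' (by simp [hAp, hB0]; ring) (by simp [hAp, hB0]; linarith) hAm'
    (by simp [hAm, hB0]; ring) hc
  rw [show η / (1 + a) = 1 - (1 - η / (1 + a)) by ring]
  convert hlim using 3 with n
  simp only [hCEA, hg, thermalEntropy]
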